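/- arXiv:2103.05097 — 2 statements merged into one kernel-verified Lean document; each statement's English description precedes it below -/
import Mathlib

section
/- Let X be a real Banach space of dimension greater than 1 and let Γ be a set of cardinality ℵ₁. The following conditions are equivalent: (1) cov(X) = ℵ₁; (2) X is the union of a family of ℵ₁-many hyperplanes of X; (3) there is a set A of nonzero continuous linear functionals on X with |A| = ℵ₁ such that for every x ∈ X there is x* ∈ A with x*(x) = 0; (4) there is a bounded linear operator T : X → ℓ∞(Γ) such that (a) for every γ ∈ Γ there is x ∈ X with T(x)(γ) ≠ 0, and (b) for every x ∈ X there is γ ∈ Γ with T(x)(γ) = 0. -/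
/-!
Hyperplanes are closed and nowhere dense, so by the Baire category theorem a Banach space is
not covered by countably many of them: every covering by members of the σ-ideal `H_σ(X)` has at
least `ℵ₁` members. Conversely a covering by `ℵ₁` members of the ideal refines to a covering by
`ℵ₁ · ℵ₀ = ℵ₁` hyperplanes. Hyperplanes, nonzero functionals and coordinates of an operator into
`ℓ∞(Γ)` are traded for one another; normalizing the functionals makes the operator bounded.
-/

open Cardinal Set

universe u v

noncomputable section

/-- A hyperplane of a normed space: the kernel of a nonzero continuous linear functional. -/
def IsHyperplane {X : Type u} [NormedAddCommGroup X] [NormedSpace ℝ X] (H : Set X) : Prop :=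
  ∃ f : X →L[ℝ] ℝ, f ≠ 0 ∧ H = {x | f x = 0}

/-- Member of the σ-ideal generated by hyperplanes: covered by countably many hyperplanes. -/
def InHyperplaneIdeal {X : Type u} [NormedAddCommGroup X] [NormedSpace ℝ X] (Y : Set X) : Prop :=
  ∃ F : Set (Set X), F.Countable ∧ (∀ H ∈ F, IsHyperplane H) ∧ Y ⊆ ⋃₀ F

/-- Additivity of the hyperplane σ-ideal. -/
def addH (X : Type u) [NormedAddCommGroup X] [NormedSpace ℝ X] : Cardinal.{u} :=
  sInf {c | ∃ F : Set (Set X), (∀ A ∈ F, InHyperplaneIdeal A) ∧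
    ¬ InHyperplaneIdeal (⋃₀ F) ∧ #F = c}

/-- Covering number of the hyperplane σ-ideal. -/
def covH (X : Type u) [NormedAddCommGroup X] [NormedSpace ℝ X] : Cardinal.{u} :=
  sInf {c | ∃ F : Set (Set X), (∀ A ∈ F, InHyperplaneIdeal A) ∧ ⋃₀ F = Set.univ ∧ #F = c}

/-- Uniformity of the hyperplane σ-ideal. -/
def nonH (X : Type u) [NormedAddCommGroup X] [NormedSpace ℝ X] : Cardinal.{u} :=
  sInf {c | ∃ Y : Set X, ¬ InHyperplaneIdeal Y ∧ #Y = c}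

/-- Cofinality of the hyperplane σ-ideal. -/
def cofH (X : Type u) [NormedAddCommGroup X] [NormedSpace ℝ X] : Cardinal.{u} :=
  sInf {c | ∃ F : Set (Set X), (∀ A ∈ F, InHyperplaneIdeal A) ∧
    (∀ Y : Set X, InHyperplaneIdeal Y → ∃ A ∈ F, Y ⊆ A) ∧ #F = c}

/-- Density of a topological space: least cardinality of a dense subset. -/
def densH (X : Type u) [TopologicalSpace X] : Cardinal.{u} :=
  sInf {c | ∃ D : Set X, Dense D ∧ #D = c}

/-- `cf([κ]^ω)`: least cardinality of a cofinal family of countable subsets of κ. -/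
def cfCtblSubsets (κ : Cardinal.{u}) : Cardinal.{u} :=
  sInf {c | ∃ F : Set (Set κ.out), (∀ S ∈ F, S.Countable) ∧
    (∀ S : Set κ.out, S.Countable → ∃ T ∈ F, S ⊆ T) ∧ #F = c}

/-- A compact space has small diagonal. -/
def HasSmallDiagonal (K : Type u) [TopologicalSpace K] : Prop :=
  ∀ A : Set (K × K), #A = Cardinal.aleph 1 → A ∩ Set.diagonal K = ∅ →
    ∃ B ⊆ A, ¬ B.Countable ∧ closure B ∩ Set.diagonal K = ∅

/-- A topological space is scattered. -/
def IsScattered (K : Type u) [TopologicalSpace K] : Prop :=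
  ∀ S : Set K, S.Nonempty → ∃ x ∈ S, ∃ U : Set K, IsOpen U ∧ U ∩ S = {x}

section Hyperplanes

variable {X : Type u} [NormedAddCommGroup X] [NormedSpace ℝ X]

lemma IsHyperplane.isNowhereDense {H : Set X} (h : IsHyperplane H) : IsNowhereDense H := by
  obtain ⟨f, hf, rfl⟩ := h
  rw [(isClosed_eq f.continuous continuous_const).isNowhereDense_iff, ← not_nonempty_iff_eq_empty]
  intro hint
  have hker : LinearMap.ker (f : X →ₗ[ℝ] ℝ) = ⊤ := Submodule.eq_top_of_nonempty_interior' _ hint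
  exact hf (ContinuousLinearMap.coe_injective (LinearMap.ker_eq_top.1 hker))

lemma IsHyperplane.inHyperplaneIdeal {H : Set X} (h : IsHyperplane H) : InHyperplaneIdeal H :=
  ⟨{H}, countable_singleton H, by simpa using h, by simp⟩

lemma InHyperplaneIdeal.isMeagre {Y : Set X} (h : InHyperplaneIdeal Y) : IsMeagre Y := by
  obtain ⟨F, hF, hH, hY⟩ := h
  rw [sUnion_eq_biUnion] at hY
  exact (isMeagre_biUnion hF fun H hH' => (hH H hH').isNowhereDense.isMeagre).mono hY

lemma aleph_one_le_mk_of_sUnion_eq_univ [CompleteSpace X] {F : Set (Set X)}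
    (hF : ∀ A ∈ F, InHyperplaneIdeal A) (hcov : ⋃₀ F = Set.univ) : ℵ₁ ≤ #F := by
  by_contra! h
  have hmeagre : IsMeagre (Set.univ : Set X) := by
    rw [← hcov, sUnion_eq_biUnion]
    exact isMeagre_biUnion (le_aleph0_iff_set_countable.1 (lt_aleph_one_iff.1 h))
      fun A hA => (hF A hA).isMeagre
  exact not_isMeagre_of_isOpen isOpen_univ univ_nonempty hmeagre

end Hyperplanes

section Covering

variable {X : Type u} [NormedAddCommGroup X] [NormedSpace ℝ X]

lemma exists_hyperplane_cover_of_forall_inHyperplaneIdeal {F : Set (Set X)}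
    (hF : ∀ A ∈ F, InHyperplaneIdeal A) :
    ∃ G : Set (Set X), (∀ H ∈ G, IsHyperplane H) ∧ ⋃₀ F ⊆ ⋃₀ G ∧ #G ≤ #F * ℵ₀ := by
  choose! G hGc hGh hGs using hF
  refine ⟨⋃ A ∈ F, G A, ?_, ?_, ?_⟩
  · simp only [mem_iUnion]
    rintro H ⟨A, hA, hH⟩
    exact hGh A hA H hH
  · rintro x ⟨A, hA, hx⟩
    obtain ⟨H, hH, hxH⟩ := hGs A hA hx
    exact ⟨H, mem_biUnion hA hH, hxH⟩
  · calc #(⋃ A ∈ F, G A) ≤ #F * ⨆ A : F, #(G A) := mk_biUnion_le _ _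
      _ ≤ #F * ℵ₀ := by
        gcongr
        exact ciSup_le' fun A => le_aleph0_iff_set_countable.2 (hGc A A.2)

lemma mk_eq_aleph_one_of_sUnion_eq_univ [CompleteSpace X] {F : Set (Set X)}
    (hF : ∀ H ∈ F, IsHyperplane H) (hcov : ⋃₀ F = Set.univ) (hle : #F ≤ ℵ₁) : #F = ℵ₁ :=
  hle.antisymm (aleph_one_le_mk_of_sUnion_eq_univ (fun H hH => (hF H hH).inHyperplaneIdeal) hcov)

lemma covH_eq_aleph_one_iff [CompleteSpace X] : covH X = ℵ₁ ↔
    ∃ F : Set (Set X), #F = ℵ₁ ∧ (∀ H ∈ F, IsHyperplane H) ∧ ⋃₀ F = Set.univ := by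
  set S := {c | ∃ F : Set (Set X), (∀ A ∈ F, InHyperplaneIdeal A) ∧ ⋃₀ F = Set.univ ∧ #F = c}
  have hcovH : covH X = sInf S := rfl
  constructor
  · intro h
    have hS : S.Nonempty := by
      rw [nonempty_iff_ne_empty]
      rintro hS
      rw [hcovH, hS, Cardinal.sInf_empty] at h
      exact aleph_pos 1 |>.ne h
    obtain ⟨F, hF, hcov, hcard⟩ : ℵ₁ ∈ S := h ▸ csInf_mem hS
    obtain ⟨G, hG, hFG, hGcard⟩ := exists_hyperplane_cover_of_forall_inHyperplaneIdeal hF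
    have hGcov : ⋃₀ G = Set.univ := univ_subset_iff.1 (hcov ▸ hFG)
    refine ⟨G, mk_eq_aleph_one_of_sUnion_eq_univ hG hGcov ?_, hG, hGcov⟩
    rwa [hcard, mul_aleph0_eq (aleph0_le_aleph 1)] at hGcard
  · rintro ⟨F, hcard, hF, hcov⟩
    have hmem : ℵ₁ ∈ S := ⟨F, fun H hH => (hF H hH).inHyperplaneIdeal, hcov, hcard⟩
    refine (csInf_le' hmem).antisymm (le_csInf ⟨_, hmem⟩ ?_)
    rintro c ⟨G, hG, hGcov, rfl⟩
    exact aleph_one_le_mk_of_sUnion_eq_univ hG hGcov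

end Covering

section Functionals

variable {X : Type u} [NormedAddCommGroup X] [NormedSpace ℝ X]

lemma exists_functionals_of_hyperplane_cover {F : Set (Set X)} (hF : ∀ H ∈ F, IsHyperplane H)
    (hcov : ⋃₀ F = Set.univ) :
    ∃ A : Set (X →L[ℝ] ℝ), #A = #F ∧ (0 : X →L[ℝ] ℝ) ∉ A ∧ ∀ x : X, ∃ f ∈ A, f x = 0 := by
  choose! f hf0 hfker using hF
  have hinj : InjOn f F := fun H₁ h₁ H₂ h₂ h => by rw [hfker H₁ h₁, hfker H₂ h₂, h]
  refine ⟨f '' F, mk_image_eq_of_injOn _ _ hinj, fun ⟨H, hH, h⟩ => hf0 H hH h, fun x => ?_⟩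
  obtain ⟨H, hH, hxH⟩ : x ∈ ⋃₀ F := hcov ▸ mem_univ x
  exact ⟨f H, mem_image_of_mem f hH, by rwa [hfker H hH] at hxH⟩

lemma exists_hyperplane_cover_of_functionals {A : Set (X →L[ℝ] ℝ)} (h0 : (0 : X →L[ℝ] ℝ) ∉ A)
    (hA : ∀ x : X, ∃ f ∈ A, f x = 0) :
    ∃ F : Set (Set X), #F ≤ #A ∧ (∀ H ∈ F, IsHyperplane H) ∧ ⋃₀ F = Set.univ := by
  refine ⟨(fun f => {x | f x = 0}) '' A, mk_image_le, ?_, eq_univ_of_forall fun x => ?_⟩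
  · rintro H ⟨f, hf, rfl⟩
    exact ⟨f, ne_of_mem_of_not_mem hf h0, rfl⟩
  · obtain ⟨f, hf, hfx⟩ := hA x
    exact ⟨_, mem_image_of_mem _ hf, hfx⟩

lemma aleph_one_le_mk_of_forall_exists_apply_eq_zero [CompleteSpace X]
    {A : Set (X →L[ℝ] ℝ)} (h0 : (0 : X →L[ℝ] ℝ) ∉ A) (hA : ∀ x : X, ∃ f ∈ A, f x = 0) :
    ℵ₁ ≤ #A := by
  obtain ⟨F, hFA, hF, hcov⟩ := exists_hyperplane_cover_of_functionals h0 hA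
  exact (aleph_one_le_mk_of_sUnion_eq_univ (fun H hH => (hF H hH).inHyperplaneIdeal) hcov).trans
    hFA

end Functionals

section LpInfty

variable {𝕜 : Type*} [NontriviallyNormedField 𝕜] {X : Type*} [NormedAddCommGroup X]
  [NormedSpace 𝕜 X] {E : Type*} [NormedAddCommGroup E] [NormedSpace 𝕜 E] {Γ : Type*}

def ContinuousLinearMap.toLpInfty (g : Γ → X →L[𝕜] E) (hg : ∀ γ, ‖g γ‖ ≤ 1) :
    X →L[𝕜] lp (fun _ : Γ => E) ⊤ :=
  LinearMap.mkContinuous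
    { toFun := fun x => ⟨fun γ => g γ x, memℓp_infty ⟨‖x‖, by
        rintro - ⟨γ, rfl⟩
        exact (g γ).le_of_opNorm_le (hg γ) x |>.trans_eq (one_mul _)⟩⟩
      map_add' := fun x y => by ext γ; exact (g γ).map_add x y
      map_smul' := fun c x => by ext γ; simp }
    1 fun x => by
      rw [one_mul]
      exact lp.norm_le_of_forall_le (norm_nonneg x) fun γ =>
        (g γ).le_of_opNorm_le (hg γ) x |>.trans_eq (one_mul _)

@[simp] lemma ContinuousLinearMap.toLpInfty_apply (g : Γ → X →L[𝕜] E) (hg : ∀ γ, ‖g γ‖ ≤ 1)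
    (x : X) (γ : Γ) : toLpInfty g hg x γ = g γ x := rfl

end LpInfty

section Operators

variable {X : Type u} [NormedAddCommGroup X] [NormedSpace ℝ X] {Γ : Type v}

lemma exists_lpInfty_of_functionals {A : Set (X →L[ℝ] ℝ)} (hΓ : lift.{u} #Γ = lift.{v} #A)
    (h0 : (0 : X →L[ℝ] ℝ) ∉ A) (hA : ∀ x : X, ∃ f ∈ A, f x = 0) :
    ∃ T : X →L[ℝ] lp (fun _ : Γ => ℝ) ⊤,
      (∀ γ : Γ, ∃ x : X, T x γ ≠ 0) ∧ (∀ x : X, ∃ γ : Γ, T x γ = 0) := by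
  obtain ⟨e⟩ : Nonempty (Γ ≃ A) := lift_mk_eq'.1 hΓ
  have hne : ∀ γ, (e γ : X →L[ℝ] ℝ) ≠ 0 := fun γ => ne_of_mem_of_not_mem (e γ).2 h0
  let g γ := (‖(e γ : X →L[ℝ] ℝ)‖⁻¹ : ℝ) • (e γ : X →L[ℝ] ℝ)
  refine ⟨ContinuousLinearMap.toLpInfty g fun γ => (norm_smul_inv_norm (hne γ)).le,
    fun γ => ?_, fun x => ?_⟩
  · obtain ⟨x, hx⟩ := DFunLike.ne_iff.1 (hne γ)
    exact ⟨x, by simpa [g, hne γ] using hx⟩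
  · obtain ⟨f, hf, hfx⟩ := hA x
    exact ⟨e.symm ⟨f, hf⟩, by simp [g, hfx]⟩

lemma exists_functionals_of_lpInfty (T : X →L[ℝ] lp (fun _ : Γ => ℝ) ⊤)
    (hT : ∀ γ : Γ, ∃ x : X, T x γ ≠ 0) (hTzero : ∀ x : X, ∃ γ : Γ, T x γ = 0) :
    ∃ A : Set (X →L[ℝ] ℝ), lift.{v} #A ≤ lift.{u} #Γ ∧ (0 : X →L[ℝ] ℝ) ∉ A ∧
      ∀ x : X, ∃ f ∈ A, f x = 0 := by
  refine ⟨range fun γ => (lp.evalCLM ℝ (fun _ : Γ => ℝ) ⊤ γ).comp T, mk_range_le_lift, ?_,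
    fun x => ?_⟩
  · rintro ⟨γ, hγ⟩
    obtain ⟨x, hx⟩ := hT γ
    exact hx (DFunLike.congr_fun hγ x)
  · obtain ⟨γ, hγ⟩ := hTzero x
    exact ⟨_, mem_range_self γ, hγ⟩

end Operators

theorem stmt9_general (X : Type u) [NormedAddCommGroup X] [NormedSpace ℝ X] [CompleteSpace X]
    (Γ : Type v) (hΓ : #Γ = Cardinal.aleph 1) :
    List.TFAE [
      covH X = Cardinal.aleph 1,
      ∃ F : Set (Set X), #F = Cardinal.aleph 1 ∧ (∀ H ∈ F, IsHyperplane H) ∧ ⋃₀ F = Set.univ,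
      ∃ A : Set (X →L[ℝ] ℝ), #A = Cardinal.aleph 1 ∧ (0 : X →L[ℝ] ℝ) ∉ A ∧
        ∀ x : X, ∃ f ∈ A, f x = 0,
      ∃ T : X →L[ℝ] lp (fun _ : Γ => ℝ) ⊤,
        (∀ γ : Γ, ∃ x : X, T x γ ≠ 0) ∧ (∀ x : X, ∃ γ : Γ, T x γ = 0)] := by
  tfae_have 1 ↔ 2 := covH_eq_aleph_one_iff
  tfae_have 2 → 3
  | ⟨F, hcard, hF, hcov⟩ => hcard ▸ exists_functionals_of_hyperplane_cover hF hcov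
  tfae_have 3 → 2
  | ⟨A, hcard, h0, hA⟩ => by
    obtain ⟨F, hFA, hF, hcov⟩ := exists_hyperplane_cover_of_functionals h0 hA
    exact ⟨F, mk_eq_aleph_one_of_sUnion_eq_univ hF hcov (hcard ▸ hFA), hF, hcov⟩
  tfae_have 3 → 4
  | ⟨A, hcard, h0, hA⟩ =>
    exists_lpInfty_of_functionals (by simp [hΓ, hcard]) h0 hA
  tfae_have 4 → 3
  | ⟨T, hT, hTzero⟩ => by
    obtain ⟨A, hle, h0, hA⟩ := exists_functionals_of_lpInfty T hT hTzero
    rw [hΓ, lift_aleph, Ordinal.lift_one, lift_le_aleph_one] at hle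
    exact ⟨A, hle.antisymm (aleph_one_le_mk_of_forall_exists_apply_eq_zero h0 hA), h0, hA⟩
  tfae_finish

/-- equivalent conditions for cov(X) = ℵ₁. -/
theorem stmt9 (X : Type u) [NormedAddCommGroup X] [NormedSpace ℝ X] [CompleteSpace X]
    (hdim : 1 < Module.rank ℝ X) (Γ : Type v) (hΓ : #Γ = Cardinal.aleph 1) :
    List.TFAE [
      covH X = Cardinal.aleph 1,
      ∃ F : Set (Set X), #F = Cardinal.aleph 1 ∧ (∀ H ∈ F, IsHyperplane H) ∧ ⋃₀ F = Set.univ,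
      ∃ A : Set (X →L[ℝ] ℝ), #A = Cardinal.aleph 1 ∧ (0 : X →L[ℝ] ℝ) ∉ A ∧
        ∀ x : X, ∃ f ∈ A, f x = 0,
      ∃ T : X →L[ℝ] lp (fun _ : Γ => ℝ) ⊤,
        (∀ γ : Γ, ∃ x : X, T x γ ≠ 0) ∧ (∀ x : X, ∃ γ : Γ, T x γ = 0)] :=
  stmt9_general X Γ hΓ

end
end

section
/- Let X be a nonseparable real Banach space admitting a fundamental biorthogonal system. Then cov(X) = ℵ₁. -/
open Cardinal Set

universe u v

noncomputable section

/-! The kernels of the functionals `f i` are hyperplanes, and every `y` lies in all but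
countably many of them: the vectors `y` with `{i | f i y ≠ 0}` countable form a closed subspace
containing every `x j`. Nonseparability makes the index set uncountable, so any `ℵ₁` of these
kernels already cover `X`. Conversely, hyperplanes are closed and nowhere dense, so by the Baire
category theorem no countable union of them is all of `X`; hence no countable family from the
σ-ideal covers `X`. -/

section HyperplaneIdeal

variable {X : Type u} [NormedAddCommGroup X] [NormedSpace ℝ X]

theorem IsHyperplane.isClosed {H : Set X} (hH : IsHyperplane H) : IsClosed H := by
  obtain ⟨g, -, rfl⟩ := hH
  exact isClosed_eq g.continuous continuous_const

theorem IsHyperplane.interior_eq_empty {H : Set X} (hH : IsHyperplane H) : interior H = ∅ := by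
  obtain ⟨g, hg, rfl⟩ := hH
  refine not_nonempty_iff_eq_empty.mp fun hint => hg (ContinuousLinearMap.coe_injective ?_)
  have hker := (LinearMap.ker (g : X →ₗ[ℝ] ℝ)).eq_top_of_nonempty_interior' hint
  simpa using LinearMap.ker_eq_top.mp hker

theorem InHyperplaneIdeal.sUnion {F : Set (Set X)} (hF : F.Countable)
    (h : ∀ A ∈ F, InHyperplaneIdeal A) : InHyperplaneIdeal (⋃₀ F) := by
  choose! G hGc hGhyp hGcov using h
  refine ⟨⋃ A ∈ F, G A, hF.biUnion hGc, ?_, ?_⟩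
  · simp only [mem_iUnion]
    rintro H ⟨A, hA, hH⟩
    exact hGhyp A hA H hH
  · rintro y ⟨A, hA, hyA⟩
    obtain ⟨H, hH, hyH⟩ := hGcov A hA hyA
    exact ⟨H, mem_biUnion hA hH, hyH⟩

theorem not_inHyperplaneIdeal_univ [CompleteSpace X] :
    ¬ InHyperplaneIdeal (Set.univ : Set X) := by
  rintro ⟨F, hFc, hF, hcov⟩
  have hdense := dense_sUnion_interior_of_closed (fun H hH => (hF H hH).isClosed) hFc
    (univ_subset_iff.mp hcov)
  have hempty : (⋃ H ∈ F, interior H) = ∅ := by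
    simp only [iUnion_eq_empty]
    exact fun H hH => (hF H hH).interior_eq_empty
  rw [hempty] at hdense
  exact not_nonempty_empty hdense.nonempty

theorem covH_le_mk {F : Set (Set X)} (hF : ∀ A ∈ F, InHyperplaneIdeal A)
    (hcov : ⋃₀ F = Set.univ) : covH X ≤ #F := by
  unfold covH
  exact csInf_le' ⟨F, hF, hcov, rfl⟩

theorem aleph_one_le_covH [CompleteSpace X] {F : Set (Set X)}
    (hF : ∀ A ∈ F, InHyperplaneIdeal A) (hcov : ⋃₀ F = Set.univ) : ℵ₁ ≤ covH X := by
  unfold covH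
  refine le_csInf ⟨#F, F, hF, hcov, rfl⟩ ?_
  rintro _ ⟨G, hG, hGcov, rfl⟩
  rw [aleph_one_le_iff, ← not_le, le_aleph0_iff_set_countable]
  exact fun hGc => not_inHyperplaneIdeal_univ (hGcov ▸ InHyperplaneIdeal.sUnion hGc hG)

theorem exists_sUnion_eq_univ_of_countable_support {ι : Type v} [Uncountable ι]
    (g : ι → X →L[ℝ] ℝ) (hg : ∀ i, g i ≠ 0) (hsupp : ∀ y, {i | g i y ≠ 0}.Countable) :
    ∃ F : Set (Set X), (∀ A ∈ F, InHyperplaneIdeal A) ∧ ⋃₀ F = Set.univ ∧ #F ≤ ℵ₁ := by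
  obtain ⟨J, hJ⟩ := le_mk_iff_exists_set.mp (aleph_one_le_iff.mpr (aleph0_lt_mk (α := ι)))
  refine ⟨(fun i => {z | g i z = 0}) '' J, ?_, ?_, ?_⟩
  · rintro _ ⟨i, -, rfl⟩
    exact ⟨{{z | g i z = 0}}, countable_singleton _, by simpa using ⟨g i, hg i, rfl⟩,
      (sUnion_singleton _).ge⟩
  · refine eq_univ_of_forall fun y => ?_
    have hJunc : ¬ J.Countable := by
      rw [← le_aleph0_iff_set_countable, hJ, not_le]
      exact aleph0_lt_aleph_one
    obtain ⟨i, hiJ, hi⟩ := not_subset.mp fun h => hJunc ((hsupp y).mono h)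
    exact ⟨_, mem_image_of_mem _ hiJ, not_not.mp hi⟩
  · rw [← lift_le_aleph_one.{u, v}]
    exact mk_image_le_lift.trans (by simp [hJ])

end HyperplaneIdeal

section CountableSupport

open Filter Topology

variable {X : Type u} [NormedAddCommGroup X] [NormedSpace ℝ X] {ι : Type v}

def countableSupport (f : ι → X →L[ℝ] ℝ) : Submodule ℝ X where
  carrier := {y | {i | f i y ≠ 0}.Countable}
  zero_mem' := by simp
  add_mem' {a b} ha hb := (ha.union hb).mono fun i hi => by
    contrapose! hi
    simp_all
  smul_mem' c y hy := hy.mono fun i hi => by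
    contrapose! hi
    simp_all

theorem isClosed_countableSupport (f : ι → X →L[ℝ] ℝ) :
    IsClosed (countableSupport f : Set X) := by
  refine isClosed_of_closure_subset fun y hy => ?_
  obtain ⟨u, hu, hlim⟩ := mem_closure_iff_seq_limit.mp hy
  refine (countable_iUnion hu).mono fun i hi => ?_
  by_contra! hzero
  simp only [mem_iUnion, not_exists] at hzero
  have hlim0 : Tendsto (fun n => f i (u n)) atTop (𝓝 0) :=
    tendsto_const_nhds.congr fun n => (not_not.mp (hzero n) : f i (u n) = 0).symm
  exact hi (tendsto_nhds_unique (((f i).continuous.tendsto y).comp hlim) hlim0)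

theorem countable_setOf_apply_ne_zero_of_topologicalClosure_span_eq_top (x : ι → X)
    (f : ι → X →L[ℝ] ℝ) (hoff : ∀ i j, i ≠ j → f i (x j) = 0)
    (hfund : (Submodule.span ℝ (range x)).topologicalClosure = ⊤) (y : X) :
    {i | f i y ≠ 0}.Countable := by
  have hspan : Submodule.span ℝ (range x) ≤ countableSupport f := Submodule.span_le.mpr <| by
    rintro _ ⟨j, rfl⟩
    exact (countable_singleton j).mono fun i hi => by_contra fun hij => hi (hoff i j hij)
  have hle := (Submodule.span ℝ (range x)).topologicalClosure_minimal hspan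
    (isClosed_countableSupport f)
  rw [hfund] at hle
  exact hle Submodule.mem_top

theorem separableSpace_of_topologicalClosure_span_eq_top [Countable ι] (x : ι → X)
    (hfund : (Submodule.span ℝ (range x)).topologicalClosure = ⊤) :
    TopologicalSpace.SeparableSpace X := by
  rw [← TopologicalSpace.isSeparable_univ_iff]
  have hsep := ((countable_range x).isSeparable.span (R := ℝ)).closure
  rwa [← Submodule.topologicalClosure_coe, hfund] at hsep

end CountableSupport

open Classical in
/-- a nonseparable Banach space with a fundamental biorthogonal system
satisfies cov(X) = ℵ₁. -/
theorem stmt10 (X : Type u) [NormedAddCommGroup X] [NormedSpace ℝ X] [CompleteSpace X]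
    (hsep : ¬ TopologicalSpace.SeparableSpace X)
    (ι : Type v) (x : ι → X) (f : ι → X →L[ℝ] ℝ)
    (hbi : ∀ i j, f i (x j) = if i = j then 1 else 0)
    (hfund : Submodule.topologicalClosure (Submodule.span ℝ (Set.range x)) = ⊤) :
    covH X = Cardinal.aleph 1 := by
  have hoff : ∀ i j, i ≠ j → f i (x j) = 0 := fun i j hij => by simpa [hij] using hbi i j
  have hf0 : ∀ i, f i ≠ 0 := fun i h => by simpa [h] using hbi i i
  have : Uncountable ι := by
    by_contra h
    have := not_uncountable_iff.mp h
    exact hsep (separableSpace_of_topologicalClosure_span_eq_top x hfund)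
  obtain ⟨F, hF, hcov, hcard⟩ := exists_sUnion_eq_univ_of_countable_support f hf0
    (countable_setOf_apply_ne_zero_of_topologicalClosure_span_eq_top x f hoff hfund)
  exact le_antisymm ((covH_le_mk hF hcov).trans hcard) (aleph_one_le_covH hF hcov)

end
end
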